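/- Let s ∈ (0,1) and assume ∫₁^{+∞} φ(t)^{1/s} dt < +∞. Then φ is a strictly decreasing bijection of (0,+∞) onto (0,+∞), and denoting by ψ : (0,+∞) → (0,+∞) its inverse, one has ∫₀^1 ψ(t^s) dt < +∞ (i.e. the boundary-blow-up profile t ↦ ψ(t^s) is integrable near 0). -/

import Mathlib

open MeasureTheory Filter

/-- The antiderivative `F(t) = ∫₀ᵗ f(τ) dτ` of `f` vanishing at `0`. -/
noncomputable def Fant (f : ℝ → ℝ) (t : ℝ) : ℝ := ∫ τ in (0:ℝ)..t, f τ

/-- The function `φ(u) = ∫ᵤ^{+∞} dt/√(F(t))`. -/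
noncomputable def phi (f : ℝ → ℝ) (u : ℝ) : ℝ := ∫ t in Set.Ioi u, 1 / Real.sqrt (Fant f t)

section Aux

variable {f f' : ℝ → ℝ} {m : ℝ}

/-- f is continuous on [0,∞). -/
lemma aux_fcont (hf_deriv : ∀ t ∈ Set.Ici (0:ℝ), HasDerivWithinAt f (f' t) (Set.Ici 0) t) :
    ContinuousOn f (Set.Ici 0) :=
  fun t ht => (hf_deriv t ht).continuousWithinAt

/-- Fant is positive for t > 0. -/
lemma aux_Fpos (hf_cont : ContinuousOn f (Set.Ici 0))
    (hf_pos : ∀ t, 0 < t → 0 < f t) {t : ℝ} (ht : 0 < t) : 0 < Fant f t := by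
  have hint : IntervalIntegrable f volume 0 t := by
    apply ContinuousOn.intervalIntegrable
    apply hf_cont.mono
    rw [Set.uIcc_of_le ht.le]
    exact fun x hx => hx.1
  exact intervalIntegral.intervalIntegral_pos_of_pos_on hint
    (fun x hx => hf_pos x hx.1) ht

/-- Fant is monotone on [0,∞). -/
lemma aux_Fmono (hf_cont : ContinuousOn f (Set.Ici 0))
    (hf_nonneg : ∀ t, 0 ≤ t → 0 ≤ f t) : MonotoneOn (Fant f) (Set.Ici 0) := by
  intro a ha b hb hab
  have h1 : IntervalIntegrable f volume 0 a := by
    apply ContinuousOn.intervalIntegrable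
    apply hf_cont.mono
    rw [Set.uIcc_of_le ha]
    exact fun x hx => hx.1
  have h2 : IntervalIntegrable f volume a b := by
    apply ContinuousOn.intervalIntegrable
    apply hf_cont.mono
    rw [Set.uIcc_of_le hab]
    exact fun x hx => le_trans ha hx.1
  have : Fant f b = Fant f a + ∫ τ in a..b, f τ := by
    rw [Fant, Fant, intervalIntegral.integral_add_adjacent_intervals h1 h2]
  rw [this]
  have : 0 ≤ ∫ τ in a..b, f τ :=
    intervalIntegral.integral_nonneg hab (fun x hx => hf_nonneg x (le_trans ha hx.1))
  linarith

/-- Fant is continuous on [0,∞). -/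
lemma aux_Fcont (hf_cont : ContinuousOn f (Set.Ici 0)) :
    ContinuousOn (Fant f) (Set.Ici 0) := by
  intro t ht
  have hsub : Set.uIcc (0:ℝ) (t+1) ⊆ Set.Ici 0 := by
    rw [Set.uIcc_of_le (by linarith [Set.mem_Ici.mp ht])]
    exact fun x hx => hx.1
  have : ContinuousOn (Fant f) (Set.uIcc (0:ℝ) (t+1)) :=
    intervalIntegral.continuousOn_primitive_interval
      ((hf_cont.mono hsub).integrableOn_compact isCompact_uIcc)
  have ht' : t ∈ Set.uIcc (0:ℝ) (t+1) := by
    rw [Set.uIcc_of_le (by linarith [Set.mem_Ici.mp ht])]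
    exact ⟨ht, by linarith⟩
  apply (this t ht').mono_of_mem_nhdsWithin
  apply Filter.mem_of_superset (inter_mem_nhdsWithin (Set.Ici 0) (Iio_mem_nhds (by linarith [Set.mem_Ici.mp ht] : t < t+1)))
  rw [Set.uIcc_of_le (by linarith [Set.mem_Ici.mp ht])]
  exact fun x hx => ⟨hx.1, (le_of_lt hx.2)⟩

/-- The ratio f(t)/t^(1+m) is monotone on (0,∞). -/
lemma aux_ratio_mono (hf_deriv : ∀ t ∈ Set.Ici (0:ℝ), HasDerivWithinAt f (f' t) (Set.Ici 0) t)
    (hf_pos : ∀ t, 0 < t → 0 < f t)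
    (hcond : ∀ t, 0 < t → 1 + m ≤ t * f' t / f t) :
    MonotoneOn (fun t => f t * t ^ (-(1+m))) (Set.Ioi 0) := by
  have hderiv : ∀ t ∈ Set.Ioi (0:ℝ), HasDerivAt (fun t => f t * t ^ (-(1+m)))
      (f' t * t ^ (-(1+m)) + f t * ((-(1+m)) * t ^ (-(1+m) - 1))) t := by
    intro t ht
    have h1 : HasDerivAt f (f' t) t :=
      (hf_deriv t (Set.mem_Ici.mpr (le_of_lt ht))).hasDerivAt (Ici_mem_nhds ht)
    have h2 : HasDerivAt (fun x : ℝ => x ^ (-(1+m))) ((-(1+m)) * t ^ (-(1+m) - 1)) t :=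
      Real.hasDerivAt_rpow_const (Or.inl (ne_of_gt ht))
    exact h1.mul h2
  apply monotoneOn_of_deriv_nonneg (convex_Ioi 0)
  · exact fun t ht => (hderiv t ht).continuousAt.continuousWithinAt
  · rw [interior_Ioi]
    exact fun t ht => (hderiv t ht).differentiableAt.differentiableWithinAt
  · rw [interior_Ioi]
    intro t ht
    rw [(hderiv t ht).deriv]
    have htpos : (0:ℝ) < t := ht
    have hfpos := hf_pos t htpos
    have hkey : (1 + m) * f t ≤ t * f' t := by
      have := hcond t htpos
      calc (1+m) * f t ≤ (t * f' t / f t) * f t := by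
            apply mul_le_mul_of_nonneg_right this hfpos.le
        _ = t * f' t := by field_simp
    have hrw : f' t * t ^ (-(1+m)) + f t * ((-(1+m)) * t ^ (-(1+m) - 1))
        = t ^ (-(1+m) - 1) * (t * f' t - (1+m) * f t) := by
      have ht1 : t ^ (-(1+m)) = t ^ (-(1+m) - 1) * t := by
        rw [← Real.rpow_add_one (ne_of_gt htpos)]
        ring_nf
      rw [ht1]; ring
    rw [hrw]
    have : (0:ℝ) ≤ t ^ (-(1+m) - 1) := Real.rpow_nonneg htpos.le _
    nlinarith

/-- lower bound on f for t ≥ 1 -/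
lemma aux_f_lb (hf_deriv : ∀ t ∈ Set.Ici (0:ℝ), HasDerivWithinAt f (f' t) (Set.Ici 0) t)
    (hf_pos : ∀ t, 0 < t → 0 < f t)
    (hcond : ∀ t, 0 < t → 1 + m ≤ t * f' t / f t) :
    ∀ t, 1 ≤ t → f 1 * t ^ (1+m) ≤ f t := by
  intro t ht
  have h := aux_ratio_mono hf_deriv hf_pos hcond (Set.mem_Ioi.mpr one_pos)
    (Set.mem_Ioi.mpr (lt_of_lt_of_le one_pos ht)) ht
  simp only [Real.one_rpow, mul_one] at h
  have htpos : (0:ℝ) < t := lt_of_lt_of_le one_pos ht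
  have hp : (0:ℝ) < t ^ (1+m) := Real.rpow_pos_of_pos htpos _
  rw [Real.rpow_neg htpos.le] at h
  calc f 1 * t ^ (1+m) ≤ (f t * (t ^ (1+m))⁻¹) * t ^ (1+m) := by
        apply mul_le_mul_of_nonneg_right h hp.le
    _ = f t := by field_simp

/-- upper bound on f for 0 < t ≤ 1 -/
lemma aux_f_ub (hf_deriv : ∀ t ∈ Set.Ici (0:ℝ), HasDerivWithinAt f (f' t) (Set.Ici 0) t)
    (hf_pos : ∀ t, 0 < t → 0 < f t)
    (hcond : ∀ t, 0 < t → 1 + m ≤ t * f' t / f t) :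
    ∀ t, 0 < t → t ≤ 1 → f t ≤ f 1 * t ^ (1+m) := by
  intro t htpos ht
  have h := aux_ratio_mono hf_deriv hf_pos hcond (Set.mem_Ioi.mpr htpos)
    (Set.mem_Ioi.mpr one_pos) ht
  simp only [Real.one_rpow, mul_one] at h
  have hp : (0:ℝ) < t ^ (1+m) := Real.rpow_pos_of_pos htpos _
  rw [Real.rpow_neg htpos.le] at h
  calc f t = (f t * (t ^ (1+m))⁻¹) * t ^ (1+m) := by field_simp
    _ ≤ f 1 * t ^ (1+m) := mul_le_mul_of_nonneg_right h hp.le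

/-- lower bound on Fant for t ≥ 2 -/
lemma aux_F_lb (hm : 0 < m) (hf_cont : ContinuousOn f (Set.Ici 0))
    (hf_nonneg : ∀ t, 0 ≤ t → 0 ≤ f t)
    (hf_mono : MonotoneOn f (Set.Ici 0))
    (hf_deriv : ∀ t ∈ Set.Ici (0:ℝ), HasDerivWithinAt f (f' t) (Set.Ici 0) t)
    (hf_pos : ∀ t, 0 < t → 0 < f t)
    (hcond : ∀ t, 0 < t → 1 + m ≤ t * f' t / f t) :
    ∀ t, 2 ≤ t → f 1 * 2 ^ (-(2+m)) * t ^ (2+m) ≤ Fant f t := by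
  intro t ht
  have htpos : (0:ℝ) < t := lt_of_lt_of_le two_pos ht
  have ht2 : (1:ℝ) ≤ t/2 := by linarith
  have ht2pos : (0:ℝ) < t/2 := by linarith
  have hint1 : IntervalIntegrable f volume 0 (t/2) := by
    apply ContinuousOn.intervalIntegrable
    apply hf_cont.mono
    rw [Set.uIcc_of_le ht2pos.le]
    exact fun x hx => hx.1
  have hint2 : IntervalIntegrable f volume (t/2) t := by
    apply ContinuousOn.intervalIntegrable
    apply hf_cont.mono
    rw [Set.uIcc_of_le (by linarith)]
    exact fun x hx => le_trans ht2pos.le hx.1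
  have hsplit : Fant f t = Fant f (t/2) + ∫ τ in (t/2)..t, f τ := by
    rw [Fant, Fant, intervalIntegral.integral_add_adjacent_intervals hint1 hint2]
  have h1 : (0:ℝ) ≤ Fant f (t/2) := by
    rw [Fant]
    exact intervalIntegral.integral_nonneg ht2pos.le (fun x hx => hf_nonneg x hx.1)
  have h2 : (t - t/2) * f (t/2) ≤ ∫ τ in (t/2)..t, f τ := by
    have := intervalIntegral.integral_mono_on (f := fun _ => f (t/2)) (g := f)
      (by linarith : t/2 ≤ t) intervalIntegrable_const hint2
      (fun x hx => hf_mono (Set.mem_Ici.mpr ht2pos.le)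
        (Set.mem_Ici.mpr (le_trans ht2pos.le hx.1)) hx.1)
    simpa using this
  have h3 : f 1 * (t/2) ^ (1+m) ≤ f (t/2) := aux_f_lb hf_deriv hf_pos hcond _ ht2
  have hkey : f 1 * (t/2) ^ (2+m) ≤ (t - t/2) * f (t/2) := by
    have : (t/2) ^ (2+m) = (t/2) * (t/2) ^ (1+m) := by
      rw [← Real.rpow_one_add' ht2pos.le (by intro h; linarith), show (1:ℝ)+(1+m) = 2+m by ring]
    rw [this]
    calc f 1 * ((t/2) * (t/2)^(1+m)) = (t/2) * (f 1 * (t/2)^(1+m)) := by ring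
      _ ≤ (t/2) * f (t/2) := mul_le_mul_of_nonneg_left h3 ht2pos.le
      _ = (t - t/2) * f (t/2) := by ring
  have hfin : f 1 * 2 ^ (-(2+m)) * t ^ (2+m) = f 1 * (t/2) ^ (2+m) := by
    rw [Real.div_rpow htpos.le two_pos.le, Real.rpow_neg two_pos.le]
    ring
  rw [hfin, hsplit]
  linarith

/-- upper bound on Fant for 0 < t ≤ 1 -/
lemma aux_F_ub (hm : 0 < m) (hf_cont : ContinuousOn f (Set.Ici 0))
    (hf_mono : MonotoneOn f (Set.Ici 0))
    (hf_deriv : ∀ t ∈ Set.Ici (0:ℝ), HasDerivWithinAt f (f' t) (Set.Ici 0) t)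
    (hf_pos : ∀ t, 0 < t → 0 < f t)
    (hcond : ∀ t, 0 < t → 1 + m ≤ t * f' t / f t) :
    ∀ t, 0 < t → t ≤ 1 → Fant f t ≤ f 1 * t ^ (2+m) := by
  intro t htpos ht
  have hint : IntervalIntegrable f volume 0 t := by
    apply ContinuousOn.intervalIntegrable
    apply hf_cont.mono
    rw [Set.uIcc_of_le htpos.le]
    exact fun x hx => hx.1
  have h1 : Fant f t ≤ (t - 0) * f t := by
    have := intervalIntegral.integral_mono_on (f := f) (g := fun _ => f t)
      htpos.le hint intervalIntegrable_const
      (fun x hx => hf_mono (Set.mem_Ici.mpr hx.1) (Set.mem_Ici.mpr htpos.le) hx.2)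
    simpa [Fant] using this
  have h2 : f t ≤ f 1 * t ^ (1+m) := aux_f_ub hf_deriv hf_pos hcond t htpos ht
  have h3 : t * (f 1 * t ^ (1+m)) = f 1 * t ^ (2+m) := by
    have : t ^ (2+m) = t * t ^ (1+m) := by
      rw [← Real.rpow_one_add' htpos.le (by intro h; linarith), show (1:ℝ)+(1+m) = 2+m by ring]
    rw [this]; ring
  calc Fant f t ≤ (t - 0) * f t := h1
    _ = t * f t := by ring
    _ ≤ t * (f 1 * t ^ (1+m)) := mul_le_mul_of_nonneg_left h2 htpos.le
    _ = f 1 * t ^ (2+m) := h3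

end Aux

section Phi

variable {g : ℝ → ℝ}

/-- splitting of the tail integral -/
lemma Phi_split (hgi : ∀ u, 0 < u → IntegrableOn g (Set.Ioi u))
    {u v : ℝ} (hu : 0 < u) (huv : u ≤ v) :
    ∫ t in Set.Ioi u, g t = (∫ t in Set.Ioc u v, g t) + ∫ t in Set.Ioi v, g t := by
  have hdisj : Disjoint (Set.Ioc u v) (Set.Ioi v) := by
    apply Set.disjoint_left.mpr
    intro x hx hx'
    exact absurd hx.2 (not_le.mpr hx')
  rw [← MeasureTheory.setIntegral_union hdisj measurableSet_Ioi
      ((hgi u hu).mono_set Set.Ioc_subset_Ioi_self)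
      ((hgi u hu).mono_set (Set.Ioi_subset_Ioi huv)),
    Set.Ioc_union_Ioi_eq_Ioi huv]

lemma Phi_sub_pos (hgc : ContinuousOn g (Set.Ioi 0))
    (hgp : ∀ t, 0 < t → 0 < g t)
    {u v : ℝ} (hu : 0 < u) (huv : u < v) :
    0 < ∫ t in Set.Ioc u v, g t := by
  rw [← intervalIntegral.integral_of_le huv.le]
  apply intervalIntegral.intervalIntegral_pos_of_pos_on
  · apply ContinuousOn.intervalIntegrable
    apply hgc.mono
    rw [Set.uIcc_of_le huv.le]
    exact fun x hx => lt_of_lt_of_le hu hx.1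
  · exact fun x hx => hgp x (lt_trans hu hx.1)
  · exact huv

lemma Phi_nonneg (hgp : ∀ t, 0 < t → 0 < g t) {u : ℝ} (hu : 0 < u) :
    0 ≤ ∫ t in Set.Ioi u, g t := by
  apply MeasureTheory.setIntegral_nonneg measurableSet_Ioi
  exact fun x hx => (hgp x (lt_trans hu hx)).le

lemma Phi_strictAnti (hgc : ContinuousOn g (Set.Ioi 0))
    (hgp : ∀ t, 0 < t → 0 < g t)
    (hgi : ∀ u, 0 < u → IntegrableOn g (Set.Ioi u)) :
    StrictAntiOn (fun u => ∫ t in Set.Ioi u, g t) (Set.Ioi 0) := by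
  intro u hu v hv huv
  simp only
  rw [Phi_split hgi hu (le_of_lt huv)]
  have := Phi_sub_pos hgc hgp hu huv
  linarith

lemma Phi_pos (hgc : ContinuousOn g (Set.Ioi 0))
    (hgp : ∀ t, 0 < t → 0 < g t)
    (hgi : ∀ u, 0 < u → IntegrableOn g (Set.Ioi u))
    {u : ℝ} (hu : 0 < u) : 0 < ∫ t in Set.Ioi u, g t := by
  rw [Phi_split hgi hu (by linarith : u ≤ u + 1)]
  have h1 := Phi_sub_pos hgc hgp hu (by linarith : u < u + 1)
  have h2 := Phi_nonneg hgp (by linarith : (0:ℝ) < u + 1)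
  linarith

lemma Phi_eq (hgi : ∀ u, 0 < u → IntegrableOn g (Set.Ioi u))
    {c : ℝ} (hc : 0 < c) {u : ℝ} (hu : 0 < u) :
    ∫ t in Set.Ioi u, g t = (∫ t in u..c, g t) + ∫ t in Set.Ioi c, g t := by
  rcases le_total u c with h | h
  · rw [intervalIntegral.integral_of_le h, ← Phi_split hgi hu h]
  · rw [intervalIntegral.integral_symm, intervalIntegral.integral_of_le h,
      Phi_split hgi hc h]
    ring

lemma Phi_cont (hgc : ContinuousOn g (Set.Ioi 0))
    (hgi : ∀ u, 0 < u → IntegrableOn g (Set.Ioi u)) :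
    ContinuousOn (fun u => ∫ t in Set.Ioi u, g t) (Set.Ioi 0) := by
  intro u0 hu0
  have hu0' : (0:ℝ) < u0 := hu0
  set c := u0/2 with hc
  have hcpos : 0 < c := by simp [hc]; linarith
  have hicc : Set.uIcc c (u0+1) ⊆ Set.Ioi 0 := by
    rw [Set.uIcc_of_le (by linarith)]
    exact fun x hx => lt_of_lt_of_le hcpos hx.1
  have hcont : ContinuousOn (fun u => ∫ t in c..u, g t) (Set.uIcc c (u0+1)) :=
    intervalIntegral.continuousOn_primitive_interval
      ((hgc.mono hicc).integrableOn_compact isCompact_uIcc)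
  have hmem : Set.uIcc c (u0+1) ∈ nhds u0 := by
    rw [Set.uIcc_of_le (by linarith)]
    exact Icc_mem_nhds (by simp [hc]; linarith) (by linarith)
  have hca : ContinuousAt (fun u => ∫ t in c..u, g t) u0 :=
    (hcont u0 (by rw [Set.uIcc_of_le (by linarith)]; constructor <;> [simp [hc]; skip] <;> linarith)).continuousAt hmem
  have key : ContinuousWithinAt
      (fun u => -(∫ t in c..u, g t) + ((∫ t in c..c, g t) + ∫ t in Set.Ioi c, g t)) (Set.Ioi 0) u0 :=
    ((hca.neg.add continuousAt_const).continuousWithinAt)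
  apply key.congr
  · intro y hy
    rw [Phi_eq hgi hcpos hy, intervalIntegral.integral_symm]
    simp
  · rw [Phi_eq hgi hcpos hu0', intervalIntegral.integral_symm]
    simp

lemma Phi_tendsto_zero (hgi : ∀ u, 0 < u → IntegrableOn g (Set.Ioi u)) :
    Tendsto (fun u => ∫ t in Set.Ioi u, g t) atTop (nhds 0) := by
  have h1 : Tendsto (fun b => ∫ t in (1:ℝ)..b, g t) atTop
      (nhds (∫ t in Set.Ioi 1, g t)) :=
    MeasureTheory.intervalIntegral_tendsto_integral_Ioi 1 (hgi 1 one_pos) tendsto_id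
  have h2 : Tendsto (fun b => (∫ t in Set.Ioi 1, g t) - ∫ t in (1:ℝ)..b, g t) atTop
      (nhds ((∫ t in Set.Ioi 1, g t) - ∫ t in Set.Ioi 1, g t)) :=
    tendsto_const_nhds.sub h1
  rw [sub_self] at h2
  apply h2.congr'
  filter_upwards [eventually_ge_atTop (1:ℝ)] with b hb
  rw [Phi_split hgi one_pos hb, intervalIntegral.integral_of_le hb]
  ring

lemma Phi_tendsto_atTop {C p : ℝ} (hC : 0 < C) (hp : p < -1)
    (hgi : ∀ u, 0 < u → IntegrableOn g (Set.Ioi u))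
    (hgp : ∀ t, 0 < t → 0 < g t)
    (hgc : ContinuousOn g (Set.Ioi 0))
    (hlb : ∀ t, 0 < t → t ≤ 1 → C * t ^ p ≤ g t) :
    Tendsto (fun u => ∫ t in Set.Ioi u, g t) (nhdsWithin 0 (Set.Ioi 0)) atTop := by
  -- the comparison integral tends to infinity
  have hXtend : Tendsto (fun u : ℝ => u ^ (p+1)) (nhdsWithin 0 (Set.Ioi 0)) atTop := by
    have h1 : Tendsto (fun u : ℝ => (u⁻¹) ^ (-(p+1))) (nhdsWithin 0 (Set.Ioi 0)) atTop :=
      (tendsto_rpow_atTop (by linarith)).comp tendsto_inv_nhdsGT_zero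
    apply h1.congr'
    filter_upwards [self_mem_nhdsWithin] with u hu
    rw [Real.inv_rpow (le_of_lt hu), ← Real.rpow_neg (le_of_lt hu), neg_neg]
  have h2 : Tendsto (fun u : ℝ => u ^ (p+1) + (-1)) (nhdsWithin 0 (Set.Ioi 0)) atTop :=
    tendsto_atTop_add_const_right _ (-1) hXtend
  have h3 : Tendsto (fun u : ℝ => (u ^ (p+1) + (-1)) / (-(p+1))) (nhdsWithin 0 (Set.Ioi 0)) atTop :=
    h2.atTop_div_const (by linarith)
  have h4 : Tendsto (fun u : ℝ => C * ((u ^ (p+1) + (-1)) / (-(p+1)))) (nhdsWithin 0 (Set.Ioi 0)) atTop :=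
    h3.const_mul_atTop hC
  apply tendsto_atTop_mono' _ _ h4
  have hIoo : Set.Ioo (0:ℝ) 1 ∈ nhdsWithin 0 (Set.Ioi 0) := by
    apply Filter.mem_of_superset (inter_mem_nhdsWithin (Set.Ioi 0) (Iio_mem_nhds one_pos))
    exact fun x hx => ⟨hx.1, hx.2⟩
  filter_upwards [hIoo] with u hu
  have hu0 : (0:ℝ) < u := hu.1
  have hu1 : u < 1 := hu.2
  have hp1 : p + 1 ≠ 0 := by linarith
  -- integrability of the comparison function on [u,1]
  have hcomp_int : IntervalIntegrable (fun t : ℝ => C * t ^ p) volume u 1 := by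
    apply ContinuousOn.intervalIntegrable
    apply ContinuousOn.mul continuousOn_const
    apply ContinuousOn.rpow_const continuousOn_id
    intro x hx
    rw [Set.uIcc_of_le hu1.le] at hx
    exact Or.inl (ne_of_gt (lt_of_lt_of_le hu0 hx.1))
  have hg_int : IntervalIntegrable g volume u 1 := by
    rw [intervalIntegrable_iff_integrableOn_Ioc_of_le hu1.le]
    exact (hgi u hu0).mono_set Set.Ioc_subset_Ioi_self
  have hmono : (∫ t in u..(1:ℝ), C * t ^ p) ≤ ∫ t in u..(1:ℝ), g t := by
    apply intervalIntegral.integral_mono_on hu1.le hcomp_int hg_int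
    intro x hx
    exact hlb x (lt_of_lt_of_le hu0 hx.1) hx.2
  have hval : (∫ t in u..(1:ℝ), C * t ^ p) = C * ((u ^ (p+1) + (-1)) / (-(p+1))) := by
    rw [intervalIntegral.integral_const_mul, integral_rpow
      (Or.inr ⟨by intro h; rw [h] at hp; linarith,
        by rw [Set.uIcc_of_le hu1.le]; exact fun h => absurd h.1 (not_le.mpr hu0)⟩)]
    rw [Real.one_rpow]
    congr 1
    rw [div_neg, ← neg_div]
    ring_nf
  calc C * ((u ^ (p+1) + (-1)) / (-(p+1))) = ∫ t in u..(1:ℝ), C * t ^ p := hval.symm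
    _ ≤ ∫ t in u..(1:ℝ), g t := hmono
    _ ≤ (∫ t in u..(1:ℝ), g t) + ∫ t in Set.Ioi 1, g t := by
        have := Phi_nonneg hgp one_pos
        linarith
    _ = ∫ t in Set.Ioi u, g t := (Phi_eq hgi one_pos hu0).symm

/-- surjectivity of a continuous function with the right limits -/
lemma Phi_surj_aux {Φ : ℝ → ℝ} (hcont : ContinuousOn Φ (Set.Ioi 0))
    (htop : Tendsto Φ (nhdsWithin 0 (Set.Ioi 0)) atTop)
    (hzero : Tendsto Φ atTop (nhds 0)) :
    Set.SurjOn Φ (Set.Ioi 0) (Set.Ioi 0) := by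
  intro y hy
  have hy' : (0:ℝ) < y := hy
  obtain ⟨a, ha1, ha2⟩ := ((htop.eventually (eventually_gt_atTop y)).and
    self_mem_nhdsWithin).exists
  have ha0 : (0:ℝ) < a := ha2
  obtain ⟨b, hb1, hb2⟩ := ((hzero.eventually (eventually_mem_set.mpr (Iio_mem_nhds hy'))).and
    (eventually_ge_atTop (a+1))).exists
  have hab : a ≤ b := by linarith
  have hsub : Set.Icc a b ⊆ Set.Ioi 0 := fun x hx => lt_of_lt_of_le ha0 hx.1
  have := intermediate_value_Icc' hab (hcont.mono hsub)
  obtain ⟨x, hx, hΦx⟩ := this ⟨le_of_lt hb1, le_of_lt ha1⟩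
  exact ⟨x, lt_of_lt_of_le ha0 hx.1, hΦx⟩

end Phi

section Gfun

variable {f f' : ℝ → ℝ} {m : ℝ}

lemma aux_sqrt_rpow {t : ℝ} (ht : 0 ≤ t) (y : ℝ) :
    Real.sqrt (t ^ y) = t ^ (y / 2) := by
  rw [Real.sqrt_eq_rpow, ← Real.rpow_mul ht, mul_one_div]

lemma aux_g_cont (hf_cont : ContinuousOn f (Set.Ici 0))
    (hf_pos : ∀ t, 0 < t → 0 < f t) :
    ContinuousOn (fun t => 1 / Real.sqrt (Fant f t)) (Set.Ioi 0) := by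
  apply ContinuousOn.div continuousOn_const
  · exact (((aux_Fcont hf_cont).mono (Set.Ioi_subset_Ici le_rfl)).sqrt)
  · intro t ht
    exact ne_of_gt (Real.sqrt_pos.mpr (aux_Fpos hf_cont hf_pos ht))

lemma aux_g_pos (hf_cont : ContinuousOn f (Set.Ici 0))
    (hf_pos : ∀ t, 0 < t → 0 < f t) :
    ∀ t, 0 < t → 0 < 1 / Real.sqrt (Fant f t) := fun t ht =>
  one_div_pos.mpr (Real.sqrt_pos.mpr (aux_Fpos hf_cont hf_pos ht))

lemma aux_g_integrable (hm : 0 < m) (hf_cont : ContinuousOn f (Set.Ici 0))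
    (hf_nonneg : ∀ t, 0 ≤ t → 0 ≤ f t)
    (hf_mono : MonotoneOn f (Set.Ici 0))
    (hf_deriv : ∀ t ∈ Set.Ici (0:ℝ), HasDerivWithinAt f (f' t) (Set.Ici 0) t)
    (hf_pos : ∀ t, 0 < t → 0 < f t)
    (hcond : ∀ t, 0 < t → 1 + m ≤ t * f' t / f t) :
    ∀ u, 0 < u → IntegrableOn (fun t => 1 / Real.sqrt (Fant f t)) (Set.Ioi u) := by
  set c := f 1 * 2 ^ (-(2+m)) with hc
  have hcpos : 0 < c := by
    apply mul_pos (hf_pos 1 one_pos)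
    exact Real.rpow_pos_of_pos two_pos _
  have h2 : IntegrableOn (fun t => 1 / Real.sqrt (Fant f t)) (Set.Ioi 2) := by
    apply Integrable.mono'
      (g := fun t : ℝ => (Real.sqrt c)⁻¹ * t ^ (-((2+m)/2)))
    · exact ((integrableOn_Ioi_rpow_of_lt (by linarith) two_pos).const_mul _)
    · exact ((aux_g_cont hf_cont hf_pos).mono
        (Set.Ioi_subset_Ioi (by norm_num))).aestronglyMeasurable measurableSet_Ioi
    · rw [MeasureTheory.ae_restrict_iff' measurableSet_Ioi]
      apply Filter.Eventually.of_forall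
      intro t ht
      have ht2 : (2:ℝ) ≤ t := le_of_lt ht
      have htpos : (0:ℝ) < t := by linarith
      have hFlb := aux_F_lb hm hf_cont hf_nonneg hf_mono hf_deriv hf_pos hcond t ht2
      have hFpos := aux_Fpos hf_cont hf_pos htpos
      rw [Real.norm_of_nonneg (by positivity)]
      have hsq : Real.sqrt (c * t ^ (2+m)) ≤ Real.sqrt (Fant f t) :=
        Real.sqrt_le_sqrt (by rw [hc]; linarith)
      have hsqpos : 0 < Real.sqrt (c * t ^ (2+m)) := by
        apply Real.sqrt_pos.mpr
        positivity
      have h1 : 1 / Real.sqrt (Fant f t) ≤ 1 / Real.sqrt (c * t ^ (2+m)) :=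
        one_div_le_one_div_of_le hsqpos hsq
      apply le_trans h1
      rw [Real.sqrt_mul hcpos.le, aux_sqrt_rpow htpos.le]
      rw [one_div, mul_inv, ← Real.rpow_neg htpos.le]
  intro u hu
  have hioc : IntegrableOn (fun t => 1 / Real.sqrt (Fant f t)) (Set.Ioc u 2) := by
    have hsub : Set.Icc u 2 ⊆ Set.Ioi 0 := fun x hx => lt_of_lt_of_le hu hx.1
    exact (((aux_g_cont hf_cont hf_pos).mono hsub).integrableOn_compact
      isCompact_Icc).mono_set Set.Ioc_subset_Icc_self
  apply (hioc.union h2).mono_set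
  intro x hx
  rcases le_or_gt x 2 with h | h
  · exact Or.inl ⟨hx, h⟩
  · exact Or.inr h

lemma aux_g_lb (hm : 0 < m) (hf_cont : ContinuousOn f (Set.Ici 0))
    (hf_mono : MonotoneOn f (Set.Ici 0))
    (hf_deriv : ∀ t ∈ Set.Ici (0:ℝ), HasDerivWithinAt f (f' t) (Set.Ici 0) t)
    (hf_pos : ∀ t, 0 < t → 0 < f t)
    (hcond : ∀ t, 0 < t → 1 + m ≤ t * f' t / f t) :
    ∀ t, 0 < t → t ≤ 1 →
      (Real.sqrt (f 1))⁻¹ * t ^ (-((2+m)/2)) ≤ 1 / Real.sqrt (Fant f t) := by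
  intro t htpos ht
  have hFub := aux_F_ub hm hf_cont hf_mono hf_deriv hf_pos hcond t htpos ht
  have hFpos := aux_Fpos hf_cont hf_pos htpos
  have hf1 : 0 < f 1 := hf_pos 1 one_pos
  have hsq : Real.sqrt (Fant f t) ≤ Real.sqrt (f 1 * t ^ (2+m)) :=
    Real.sqrt_le_sqrt hFub
  have hsqpos : 0 < Real.sqrt (Fant f t) := Real.sqrt_pos.mpr hFpos
  have h1 : 1 / Real.sqrt (f 1 * t ^ (2+m)) ≤ 1 / Real.sqrt (Fant f t) :=
    one_div_le_one_div_of_le hsqpos hsq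
  apply le_trans _ h1
  rw [Real.sqrt_mul hf1.le, aux_sqrt_rpow htpos.le]
  rw [one_div, mul_inv, ← Real.rpow_neg htpos.le]

end Gfun

theorem blowup_profile_integrable (f f' : ℝ → ℝ) (m M : ℝ) (hm : 0 < m) (hmM : m < M)
    (hf_nonneg : ∀ t, 0 ≤ t → 0 ≤ f t) (hf0 : f 0 = 0)
    (hf_pos : ∀ t, 0 < t → 0 < f t)
    (hf_mono : MonotoneOn f (Set.Ici 0))
    (hf_deriv : ∀ t ∈ Set.Ici (0:ℝ), HasDerivWithinAt f (f' t) (Set.Ici 0) t)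
    (hf'_cont : ContinuousOn f' (Set.Ici 0))
    (hcond : ∀ t, 0 < t → 1 + m ≤ t * f' t / f t ∧ t * f' t / f t ≤ 1 + M)
    (s : ℝ) (hs : s ∈ Set.Ioo (0:ℝ) 1)
    (hint : IntegrableOn (fun t => phi f t ^ (1 / s)) (Set.Ioi 1)) :
    StrictAntiOn (phi f) (Set.Ioi 0) ∧
    Set.BijOn (phi f) (Set.Ioi 0) (Set.Ioi 0) ∧
    ∀ ψ : ℝ → ℝ, Set.InvOn ψ (phi f) (Set.Ioi 0) (Set.Ioi 0) →
      IntegrableOn (fun t => ψ (t ^ s)) (Set.Ioo 0 1) := by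
  have hcond' : ∀ t, 0 < t → 1 + m ≤ t * f' t / f t := fun t ht => (hcond t ht).1
  have hf_cont : ContinuousOn f (Set.Ici 0) := aux_fcont hf_deriv
  have hgc := aux_g_cont hf_cont hf_pos
  have hgp := aux_g_pos hf_cont hf_pos
  have hgi := aux_g_integrable hm hf_cont hf_nonneg hf_mono hf_deriv hf_pos hcond'
  have hlb := aux_g_lb hm hf_cont hf_mono hf_deriv hf_pos hcond'
  have hanti : StrictAntiOn (phi f) (Set.Ioi 0) := Phi_strictAnti hgc hgp hgi
  have hcont : ContinuousOn (phi f) (Set.Ioi 0) := Phi_cont hgc hgi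
  have hppos : ∀ u, 0 < u → 0 < phi f u := fun u hu => Phi_pos hgc hgp hgi hu
  have hCpos : 0 < (Real.sqrt (f 1))⁻¹ :=
    inv_pos.mpr (Real.sqrt_pos.mpr (hf_pos 1 one_pos))
  have htop : Tendsto (phi f) (nhdsWithin 0 (Set.Ioi 0)) atTop :=
    Phi_tendsto_atTop hCpos (by linarith : -((2+m)/2) < -1) hgi hgp hgc hlb
  have hzero : Tendsto (phi f) atTop (nhds 0) := Phi_tendsto_zero hgi
  have hsurj : Set.SurjOn (phi f) (Set.Ioi 0) (Set.Ioi 0) :=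
    Phi_surj_aux hcont htop hzero
  have hbij : Set.BijOn (phi f) (Set.Ioi 0) (Set.Ioi 0) :=
    ⟨fun u hu => hppos u hu, hanti.injOn, hsurj⟩
  refine ⟨hanti, hbij, ?_⟩
  intro ψ hψ
  -- ψ agrees with the genuine inverse on (0,∞)
  have hψ_spec : ∀ y, y ∈ Set.Ioi (0:ℝ) → ψ y ∈ Set.Ioi (0:ℝ) ∧ phi f (ψ y) = y := by
    intro y hy
    obtain ⟨x, hx, hfx⟩ := hsurj hy
    have h1 : ψ y = x := by rw [← hfx]; exact hψ.1 hx
    exact ⟨h1 ▸ hx, by rw [h1, hfx]⟩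
  -- strict antitonicity of ψ on (0,∞)
  have hψanti : ∀ a ∈ Set.Ioi (0:ℝ), ∀ b ∈ Set.Ioi (0:ℝ), a < b → ψ b < ψ a := by
    intro a ha b hb hab
    obtain ⟨hψa, hphia⟩ := hψ_spec a ha
    obtain ⟨hψb, hphib⟩ := hψ_spec b hb
    by_contra hcon
    push_neg at hcon
    rcases eq_or_lt_of_le hcon with h | h
    · rw [← hphia, ← hphib, ← h] at hab
      exact lt_irrefl _ hab
    · have := hanti hψa hψb h
      rw [hphia, hphib] at this
      linarith
  -- the key equivalence
  have hkey : ∀ lam, 0 < lam → ∀ x ∈ Set.Ioi (0:ℝ), (lam < ψ x ↔ x < phi f lam) := by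
    intro lam hlam x hx
    obtain ⟨hψx, hphix⟩ := hψ_spec x hx
    constructor
    · intro h
      have := hanti (Set.mem_Ioi.mpr hlam) hψx h
      rw [hphix] at this
      exact this
    · intro h
      by_contra hcon
      push_neg at hcon
      rcases eq_or_lt_of_le hcon with heq | hlt
      · rw [heq] at hphix; rw [hphix] at h; exact lt_irrefl _ h
      · have := hanti hψx (Set.mem_Ioi.mpr hlam) hlt
        rw [hphix] at this
        linarith
  have hs0 : 0 < s := hs.1
  have hs1 : s < 1 := hs.2
  -- antitonicity of the profile
  have hAnti2 : AntitoneOn (fun t => ψ (t ^ s)) (Set.Ioo 0 1) := by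
    intro t1 h1 t2 h2 h12
    have hp1 : (0:ℝ) < t1 ^ s := Real.rpow_pos_of_pos h1.1 s
    have hp2 : (0:ℝ) < t2 ^ s := Real.rpow_pos_of_pos h2.1 s
    rcases eq_or_lt_of_le h12 with heq | hlt
    · rw [heq]
    · have hps : t1 ^ s < t2 ^ s := Real.rpow_lt_rpow h1.1.le hlt hs0
      exact (hψanti _ (Set.mem_Ioi.mpr hp1) _ (Set.mem_Ioi.mpr hp2) hps).le
  have hmeas : AEMeasurable (fun t => ψ (t ^ s)) (volume.restrict (Set.Ioo 0 1)) :=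
    aemeasurable_restrict_of_antitoneOn measurableSet_Ioo hAnti2
  have hnn : 0 ≤ᵐ[volume.restrict (Set.Ioo 0 1)] fun t => ψ (t ^ s) := by
    have h : ∀ᵐ t ∂(volume.restrict (Set.Ioo (0:ℝ) 1)), 0 ≤ ψ (t ^ s) := by
      rw [MeasureTheory.ae_restrict_iff' measurableSet_Ioo]
      apply Filter.Eventually.of_forall
      intro t ht
      have : (0:ℝ) < t ^ s := Real.rpow_pos_of_pos ht.1 s
      exact ((hψ_spec _ (Set.mem_Ioi.mpr this)).1 : (0:ℝ) < ψ (t ^ s)).le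
    exact h
  refine ⟨hmeas.aestronglyMeasurable, ?_⟩
  rw [hasFiniteIntegral_iff_ofReal hnn]
  rw [MeasureTheory.lintegral_eq_lintegral_meas_lt _ hnn hmeas]
  -- bound the distribution function
  set μ := volume.restrict (Set.Ioo (0:ℝ) 1) with hμ
  have hbound1 : ∀ lam, lam ∈ Set.Ioc (0:ℝ) 1 → μ {a | lam < ψ (a ^ s)} ≤ 1 := by
    intro lam _
    calc μ {a | lam < ψ (a ^ s)} ≤ μ Set.univ := measure_mono (Set.subset_univ _)
      _ = volume (Set.Ioo (0:ℝ) 1) := by rw [hμ, Measure.restrict_apply_univ]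
      _ = 1 := by rw [Real.volume_Ioo]; norm_num
  have hbound2 : ∀ lam, lam ∈ Set.Ioi (1:ℝ) →
      μ {a | lam < ψ (a ^ s)} ≤ ENNReal.ofReal (phi f lam ^ (1/s)) := by
    intro lam hlam
    have hlam0 : (0:ℝ) < lam := lt_trans one_pos hlam
    rw [hμ, Measure.restrict_apply' measurableSet_Ioo]
    have hsub : {a : ℝ | lam < ψ (a ^ s)} ∩ Set.Ioo 0 1 ⊆
        Set.Ioo 0 (phi f lam ^ (1/s)) := by
      rintro t ⟨ht1, ht2⟩
      have htpos : (0:ℝ) < t := ht2.1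
      have hts : (0:ℝ) < t ^ s := Real.rpow_pos_of_pos htpos s
      have h3 : t ^ s < phi f lam := (hkey lam hlam0 _ (Set.mem_Ioi.mpr hts)).mp ht1
      refine ⟨htpos, ?_⟩
      have h4 : (t ^ s) ^ (1/s) < (phi f lam) ^ (1/s) :=
        Real.rpow_lt_rpow hts.le h3 (by positivity)
      rwa [← Real.rpow_mul htpos.le, mul_one_div_cancel (ne_of_gt hs0),
        Real.rpow_one] at h4
    calc volume ({a : ℝ | lam < ψ (a ^ s)} ∩ Set.Ioo 0 1)
        ≤ volume (Set.Ioo 0 (phi f lam ^ (1/s))) := measure_mono hsub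
      _ = ENNReal.ofReal (phi f lam ^ (1/s)) := by rw [Real.volume_Ioo, sub_zero]
  -- split the outer integral
  have hsplit : ∫⁻ lam in Set.Ioi (0:ℝ), μ {a | lam < ψ (a ^ s)}
      = (∫⁻ lam in Set.Ioc (0:ℝ) 1, μ {a | lam < ψ (a ^ s)})
        + ∫⁻ lam in Set.Ioi (1:ℝ), μ {a | lam < ψ (a ^ s)} := by
    rw [← MeasureTheory.lintegral_union measurableSet_Ioi
      (Set.Ioc_disjoint_Ioi le_rfl), Set.Ioc_union_Ioi_eq_Ioi zero_le_one]
  rw [hsplit]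
  have hfin1 : (∫⁻ lam in Set.Ioc (0:ℝ) 1, μ {a | lam < ψ (a ^ s)}) ≤ 1 := by
    calc (∫⁻ lam in Set.Ioc (0:ℝ) 1, μ {a | lam < ψ (a ^ s)})
        ≤ ∫⁻ _ in Set.Ioc (0:ℝ) 1, 1 := by
          apply MeasureTheory.lintegral_mono_ae
          rw [MeasureTheory.ae_restrict_iff' measurableSet_Ioc]
          exact Filter.Eventually.of_forall hbound1
      _ = 1 * volume (Set.Ioc (0:ℝ) 1) := MeasureTheory.setLIntegral_const _ 1
      _ = 1 := by rw [Real.volume_Ioc]; norm_num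
  have hfin2 : (∫⁻ lam in Set.Ioi (1:ℝ), μ {a | lam < ψ (a ^ s)}) < ⊤ := by
    have hb : (∫⁻ lam in Set.Ioi (1:ℝ), μ {a | lam < ψ (a ^ s)})
        ≤ ∫⁻ lam in Set.Ioi (1:ℝ), ENNReal.ofReal (phi f lam ^ (1/s)) := by
      apply MeasureTheory.lintegral_mono_ae
      rw [MeasureTheory.ae_restrict_iff' measurableSet_Ioi]
      exact Filter.Eventually.of_forall hbound2
    apply lt_of_le_of_lt hb
    have := hint.hasFiniteIntegral
    apply lt_of_le_of_lt _ this
    apply MeasureTheory.lintegral_mono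
    intro lam
    exact le_trans (ENNReal.ofReal_le_ofReal (le_abs_self _))
      (le_of_eq (Real.enorm_eq_ofReal_abs _).symm)
  calc (∫⁻ lam in Set.Ioc (0:ℝ) 1, μ {a | lam < ψ (a ^ s)})
        + ∫⁻ lam in Set.Ioi (1:ℝ), μ {a | lam < ψ (a ^ s)}
      ≤ 1 + ∫⁻ lam in Set.Ioi (1:ℝ), μ {a | lam < ψ (a ^ s)} := by
        exact add_le_add_left hfin1 _
    _ < ⊤ := ENNReal.add_lt_top.mpr ⟨ENNReal.one_lt_top, hfin2⟩
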